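/- Let M be infinite and let θ and κ be non-negative integers. Then there is a countably infinite ⟨θ, κ, θ'⟩-tiling T of 𝓡, where θ' = 4θ + 2κ. -/
import Mathlib


open Filter Set

namespace GoE

variable {G M Q : Type*}

/-- A left homogeneous space `⟨M, G, ▷⟩` together with a coordinate system
`⟨m₀, (g_{m₀,m})_{m∈M}⟩`: a cell space with finite stabiliser `G₀` of `m₀`. -/
structure CellSpace (G M : Type*) [Group G] where
  act : G → M → M
  one_act : ∀ m : M, act 1 m = m
  mul_act : ∀ (g h : G) (m : M), act (g * h) m = act g (act h m)
  transitive : ∀ m m' : M, ∃ g : G, act g m = m'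
  m0 : M
  coord : M → G
  coord_act : ∀ m : M, act (coord m) m0 = m
  stab_finite : {g : G | act g m0 = m0}.Finite

variable [Group G]

namespace CellSpace

/-- Membership in the stabiliser `G₀` of `m₀`. -/
def stab (R : CellSpace G M) (g : G) : Prop := R.act g R.m0 = R.m0

/-- The induced right semi-action `m ↝ gG₀ = g_{m₀,m} g ▷ m₀`, on representatives. -/
def sAct (R : CellSpace G M) (m : M) (g : G) : M := R.act (R.coord m * g) R.m0

/-- `m ↝ ι n` where `ι : M → G/G₀`, `n ↦ G_{m₀,n}` is the canonical identification. -/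
def nAct (R : CellSpace G M) (m n : M) : M := R.act (R.coord m * R.coord n) R.m0

/-- `S ⊆ G` represents a finite symmetric right generating set of cosets
(`G₀ · S ⊆ S`, `S⁻¹ ⊆ S`, and `S` generates). -/
structure IsRightGenSet (R : CellSpace G M) (S : Set G) : Prop where
  finite : S.Finite
  saturated : ∀ s ∈ S, ∀ g₀ : G, R.stab g₀ → s * g₀ ∈ S
  stab_mul : ∀ g₀ : G, R.stab g₀ → ∀ s ∈ S, g₀ * s ∈ S
  symm : ∀ s ∈ S, s⁻¹ ∈ S
  generates : ∀ m : M, ∃ (k : ℕ) (f : ℕ → M), f 0 = R.m0 ∧ f k = m ∧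
    ∀ i < k, ∃ s ∈ S, f (i + 1) = R.sAct (f i) s

/-- There is an `S`-path of length `n` from `m` to `m'` in the `S`-Cayley graph. -/
def Chain (R : CellSpace G M) (S : Set G) (m m' : M) (n : ℕ) : Prop :=
  ∃ f : ℕ → M, f 0 = m ∧ f n = m' ∧ ∀ i < n, ∃ s ∈ S, f (i + 1) = R.sAct (f i) s

/-- The `S`-metric `d`. -/
noncomputable def dist (R : CellSpace G M) (S : Set G) (m m' : M) : ℕ :=
  sInf {n : ℕ | R.Chain S m m' n}

/-- The ball `B(m, ρ)` of radius `ρ` centred at `m`. -/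
noncomputable def ball (R : CellSpace G M) (S : Set G) (m : M) (ρ : ℕ) : Set M :=
  {m' : M | R.dist S m m' ≤ ρ}

/-- The `θ`-interior `A^{-θ}` of `A`. -/
noncomputable def inter (R : CellSpace G M) (S : Set G) (A : Set M) (θ : ℕ) : Set M :=
  {m ∈ A | R.ball S m θ ⊆ A}

/-- The `θ`-closure `A^{+θ}` of `A`. -/
noncomputable def clos (R : CellSpace G M) (S : Set G) (A : Set M) (θ : ℕ) : Set M :=
  {m : M | (R.ball S m θ ∩ A).Nonempty}

/-- The external `θ`-boundary `∂θ⁺A = A^{+θ} ∖ A`. -/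
noncomputable def extB (R : CellSpace G M) (S : Set G) (A : Set M) (θ : ℕ) : Set M :=
  R.clos S A θ \ A

/-- The internal `θ`-boundary `∂θ⁻A = A ∖ A^{-θ}`. -/
noncomputable def intB (R : CellSpace G M) (S : Set G) (A : Set M) (θ : ℕ) : Set M :=
  A \ R.inter S A θ

/-- The `θ`-boundary `∂θA = A^{+θ} ∖ A^{-θ}`. -/
noncomputable def bdry (R : CellSpace G M) (S : Set G) (A : Set M) (θ : ℕ) : Set M :=
  R.clos S A θ \ R.inter S A θ

end CellSpace

/-- The set `X_A` of restrictions to `A` of the elements of `X`. -/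
def restr (A : Set M) (X : Set (M → Q)) : Set (A → Q) :=
  (fun x : M → Q => A.restrict x) '' X

/-- The pattern `p` (with domain `A`) semi-occurs in the configuration `c`:
there is `h ∈ H` with `h ⊛ p = c↾_{h ▷ dom p}`. -/
def SemiOccurs (R : CellSpace G M) (H : Subgroup G) {A : Set M} (p : A → Q)
    (c : M → Q) : Prop :=
  ∃ h ∈ H, ∀ a : A, c (R.act h ↑a) = p a

/-- The pattern `p` (with domain `A`) occurs at `t` in the configuration `c`:
`t ⊛' p = c↾_{t ↝ A}`. -/
def OccursAt (R : CellSpace G M) {A : Set M} (p : A → Q) (t : M) (c : M → Q) : Prop :=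
  ∀ a : A, c (R.nAct t ↑a) = p a

/-- The pattern `p` is allowed in `X`: it semi-occurs in some point of `X`. -/
def Allowed (R : CellSpace G M) (H : Subgroup G) (X : Set (M → Q)) {A : Set M}
    (p : A → Q) : Prop :=
  ∃ x ∈ X, SemiOccurs R H p x

/-- The set `⟨𝔉⟩` generated by a set `𝔉` of forbidden patterns. -/
def Generated (R : CellSpace G M) (H : Subgroup G) (𝔉 : Set (Σ A : Set M, A → Q)) :
    Set (M → Q) :=
  {c : M → Q | ∀ f ∈ 𝔉, ¬ SemiOccurs R H f.2 c}

/-- `X` is a subshift of `Q^M`: it is generated by a set of blocks. -/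
def IsSubshift (R : CellSpace G M) (H : Subgroup G) (X : Set (M → Q)) : Prop :=
  ∃ 𝔉 : Set (Σ A : Set M, A → Q), (∀ f ∈ 𝔉, f.1.Finite) ∧ X = Generated R H 𝔉

/-- `X` is a subshift of finite type: it is generated by a finite set of blocks. -/
def IsSubshiftFT (R : CellSpace G M) (H : Subgroup G) (X : Set (M → Q)) : Prop :=
  ∃ 𝔉 : Set (Σ A : Set M, A → Q), 𝔉.Finite ∧ (∀ f ∈ 𝔉, f.1.Finite) ∧
    X = Generated R H 𝔉

/-- `X` is a `κ`-step subshift: it is generated by a set of `B(κ)`-blocks. -/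
def IsStep (R : CellSpace G M) (S : Set G) (H : Subgroup G) (X : Set (M → Q))
    (κ : ℕ) : Prop :=
  ∃ 𝔉 : Set (Σ A : Set M, A → Q), (∀ f ∈ 𝔉, f.1 = R.ball S R.m0 κ) ∧
    X = Generated R H 𝔉

/-- `X` is `κ`-strongly irreducible. -/
def IsStronglyIrr (R : CellSpace G M) (S : Set G) (H : Subgroup G)
    (X : Set (M → Q)) (κ : ℕ) : Prop :=
  ∀ (A B : Set M), A.Finite → B.Finite → ∀ (p : A → Q) (p' : B → Q),
    Allowed R H X p → Allowed R H X p' →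
    (∀ a ∈ A, ∀ b ∈ B, κ + 1 ≤ R.dist S a b) →
    ∃ x ∈ X, A.restrict x = p ∧ B.restrict x = p'

/-- `X` has `ρ`-bounded propagation. -/
def HasBoundedProp (R : CellSpace G M) (S : Set G) (X : Set (M → Q)) (ρ : ℕ) : Prop :=
  ∀ F : Set M, F.Finite → ∀ p : F → Q,
    (∀ f ∈ F, ∃ x ∈ X, ∀ (m : M) (hm : m ∈ R.ball S f ρ ∩ F), p ⟨m, hm.2⟩ = x m) →
    ∃ x ∈ X, F.restrict x = p

/-- `Δ` is a `κ`-local map from `X` to `Y`. -/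
def IsLocalMap (R : CellSpace G M) (S : Set G) (H : Subgroup G)
    (X Y : Set (M → Q)) (Δ : (M → Q) → (M → Q)) (κ : ℕ) : Prop :=
  Set.MapsTo Δ X Y ∧
  ∃ N : Set M, N ⊆ R.ball S R.m0 κ ∧
    (∀ g₀ : G, R.stab g₀ → ∀ n ∈ N, R.act g₀ n ∈ N) ∧
    ∃ δ : (N → Q) → Q,
      (∀ h₀ ∈ H, R.stab h₀ →
        ∀ ℓ ∈ restr N X, ∀ ℓ' : N → Q,
          (∀ (n : M) (hn : n ∈ N) (hn' : R.act h₀⁻¹ n ∈ N),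
            ℓ' ⟨n, hn⟩ = ℓ ⟨R.act h₀⁻¹ n, hn'⟩) →
          δ ℓ' = δ ℓ) ∧
      ∀ x ∈ X, ∀ m : M, Δ x m = δ (fun n : N => x (R.nAct m ↑n))

/-- `Δ` is pre-injective on `X`. -/
def PreInjective (X : Set (M → Q)) (Δ : (M → Q) → (M → Q)) : Prop :=
  ∀ x ∈ X, ∀ x' ∈ X, Δ x = Δ x' → {m : M | x m ≠ x' m}.Finite → x = x'

/-- The cell space `R` is right amenable: there is a finitely additive probability
measure on the power set of `M` that is semi-invariant under the right semi-action. -/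
def RightAmenable (R : CellSpace G M) : Prop :=
  ∃ μ : Set M → ℝ, (∀ A : Set M, 0 ≤ μ A) ∧ μ Set.univ = 1 ∧
    (∀ A B : Set M, Disjoint A B → μ (A ∪ B) = μ A + μ B) ∧
    ∀ (g : G) (A : Set M), Set.InjOn (fun m => R.sAct m g) A →
      μ ((fun m => R.sAct m g) '' A) = μ A

/-- `F` is a right Følner net in `R` (indexed by the directed set `I`). -/
def IsFolnerNet (R : CellSpace G M) (S : Set G) {I : Type*} [Preorder I]
    (F : I → Set M) : Prop :=
  (∀ i, (F i).Nonempty) ∧ (∀ i, (F i).Finite) ∧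
  ∀ ρ : ℕ, Tendsto (fun i => ((R.bdry S (F i) ρ).ncard : ℝ) / ((F i).ncard : ℝ))
    atTop (nhds 0)

/-- The entropy of `X ⊆ Q^M` with respect to the net `F`:
`limsup_i log|X_{F_i}| / |F_i|`. -/
noncomputable def entropy (R : CellSpace G M) (S : Set G) {I : Type*} [Preorder I]
    (F : I → Set M) (X : Set (M → Q)) : ℝ :=
  limsup (fun i => Real.log ((restr (F i) X).ncard : ℝ) / ((F i).ncard : ℝ)) atTop

/-- `T` is a `⟨θ, κ, θ'⟩`-tiling of `R`. -/
def IsTiling (R : CellSpace G M) (S : Set G) (θ κ θ' : ℕ) (T : Set M) : Prop :=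
  (∀ t ∈ T, ∀ t' ∈ T, t ≠ t' →
    ∀ a ∈ R.ball S t θ, ∀ b ∈ R.ball S t' θ, κ + 1 ≤ R.dist S a b) ∧
  ∀ m : M, ∃ t ∈ T, m ∈ R.ball S t θ'

/-- The action `h ⊛ c` of `h ∈ G` on configurations: `(h ⊛ c)(m) = c(h⁻¹ ▷ m)`. -/
def shiftAct (R : CellSpace G M) (h : G) (c : M → Q) : M → Q :=
  fun m => c (R.act h⁻¹ m)


namespace CellSpace
variable (R : CellSpace G M) (S : Set G)

lemma chain_refl (m : M) : R.Chain S m m 0 :=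
  ⟨fun _ => m, rfl, rfl, fun i hi => absurd hi (Nat.not_lt_zero i)⟩

lemma chain_concat {m n m' : M} {a b : ℕ} (h1 : R.Chain S m n a) (h2 : R.Chain S n m' b) :
    R.Chain S m m' (a + b) := by
  obtain ⟨f, hf0, hfa, hf⟩ := h1
  obtain ⟨g, hg0, hgb, hg⟩ := h2
  refine ⟨fun i => if i ≤ a then f i else g (i - a), by simp [hf0], ?_, ?_⟩
  · by_cases hb : a + b ≤ a
    · have hb0 : b = 0 := by omega
      subst hb0
      simp only [if_pos hb, Nat.add_zero, hfa, ← hg0, hgb]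
      simp
    · simp only [if_neg hb]
      have : a + b - a = b := by omega
      rw [this, hgb]
  · intro i hi
    by_cases h : i + 1 ≤ a
    · obtain ⟨s, hs, he⟩ := hf i (by omega)
      exact ⟨s, hs, by simp [h, (by omega : i ≤ a), he]⟩
    · obtain ⟨s, hs, he⟩ := hg (i - a) (by omega)
      refine ⟨s, hs, ?_⟩
      simp only [if_neg h]
      have h2 : i + 1 - a = (i - a) + 1 := by omega
      rw [h2, he]
      by_cases hia : i ≤ a
      · have : i = a := by omega
        subst this
        simp [Nat.sub_self, hg0, hfa]
      · simp [hia]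

lemma stab_inv {g : G} (h : R.stab g) : R.stab g⁻¹ := by
  unfold stab at *
  conv_lhs => rw [← h]
  rw [← R.mul_act, inv_mul_cancel, R.one_act]

lemma edge_symm (hS : R.IsRightGenSet S) {m m' : M} {s : G} (hs : s ∈ S)
    (h : m' = R.sAct m s) : ∃ s' ∈ S, m = R.sAct m' s' := by
  set g₀ := (R.coord m * s)⁻¹ * R.coord m' with hg0
  have hst : R.stab g₀ := by
    unfold stab
    rw [hg0, R.mul_act, R.coord_act]
    have : m' = R.act (R.coord m * s) R.m0 := h
    rw [this, ← R.mul_act, inv_mul_cancel, R.one_act]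
  refine ⟨g₀⁻¹ * s⁻¹, hS.stab_mul g₀⁻¹ (R.stab_inv hst) s⁻¹ (hS.symm s hs), ?_⟩
  unfold sAct
  have hc : R.coord m' * (g₀⁻¹ * s⁻¹) = R.coord m := by rw [hg0]; group
  rw [hc, R.coord_act]

lemma chain_symm (hS : R.IsRightGenSet S) {m m' : M} {n : ℕ}
    (h : R.Chain S m m' n) : R.Chain S m' m n := by
  induction n generalizing m' with
  | zero =>
    obtain ⟨f, h0, hn, _⟩ := h
    rw [← hn, h0]
    exact R.chain_refl S m
  | succ n ih =>
    obtain ⟨f, h0, hn, hstep⟩ := h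
    have hc : R.Chain S m (f n) n := ⟨f, h0, rfl, fun i hi => hstep i (by omega)⟩
    obtain ⟨s, hs, he⟩ := hstep n (by omega)
    have hm' : m' = R.sAct (f n) s := by rw [← hn, he]
    obtain ⟨s', hs', he'⟩ := R.edge_symm S hS hs hm'
    have h1 : R.Chain S m' (f n) 1 := by
      refine ⟨fun i => if i = 0 then m' else f n, by simp, by simp, ?_⟩
      intro i hi
      have : i = 0 := by omega
      subst this
      exact ⟨s', hs', by simp [he']⟩
    have := R.chain_concat S h1 (ih hc)
    simpa [Nat.add_comm] using this

lemma chain_from_base (hS : R.IsRightGenSet S) (m : M) : ∃ k, R.Chain S R.m0 m k := by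
  obtain ⟨k, f, h0, hk, hs⟩ := hS.generates m
  exact ⟨k, f, h0, hk, hs⟩

lemma chain_exists (hS : R.IsRightGenSet S) (m m' : M) : ∃ k, R.Chain S m m' k := by
  obtain ⟨a, ha⟩ := R.chain_from_base S hS m
  obtain ⟨b, hb⟩ := R.chain_from_base S hS m'
  exact ⟨a + b, R.chain_concat S (R.chain_symm S hS ha) hb⟩

lemma dist_chain (hS : R.IsRightGenSet S) (m m' : M) :
    R.Chain S m m' (R.dist S m m') :=
  Nat.sInf_mem (R.chain_exists S hS m m')

lemma dist_le {m m' : M} {n : ℕ} (h : R.Chain S m m' n) : R.dist S m m' ≤ n :=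
  Nat.sInf_le h

lemma dist_self (m : M) : R.dist S m m = 0 :=
  Nat.le_zero.mp (R.dist_le S (R.chain_refl S m))

lemma dist_comm (hS : R.IsRightGenSet S) (m m' : M) :
    R.dist S m m' = R.dist S m' m :=
  le_antisymm (R.dist_le S (R.chain_symm S hS (R.dist_chain S hS m' m)))
    (R.dist_le S (R.chain_symm S hS (R.dist_chain S hS m m')))

lemma dist_triangle (hS : R.IsRightGenSet S) (m n m' : M) :
    R.dist S m m' ≤ R.dist S m n + R.dist S n m' :=
  R.dist_le S (R.chain_concat S (R.dist_chain S hS m n) (R.dist_chain S hS n m'))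

lemma eq_of_dist_eq_zero (hS : R.IsRightGenSet S) {m m' : M}
    (h : R.dist S m m' = 0) : m = m' := by
  have := R.dist_chain S hS m m'
  rw [h] at this
  obtain ⟨f, h0, hn, _⟩ := this
  rw [← h0, hn]

lemma ball_finite (hS : R.IsRightGenSet S) (m : M) (ρ : ℕ) :
    (R.ball S m ρ).Finite := by
  induction ρ with
  | zero =>
    refine Set.Finite.subset (Set.finite_singleton m) ?_
    intro m' hm'
    have : R.dist S m m' = 0 := Nat.le_zero.mp hm'
    simp [← R.eq_of_dist_eq_zero S hS this]
  | succ ρ ih =>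
    have hsub : R.ball S m (ρ + 1) ⊆
        R.ball S m ρ ∪ ⋃ s ∈ S, (fun x => R.sAct x s) '' (R.ball S m ρ) := by
      intro m' hm'
      rcases le_or_gt (R.dist S m m') ρ with h | h
      · exact Or.inl h
      · have hd : R.dist S m m' = ρ + 1 := le_antisymm hm' h
        have hc := R.dist_chain S hS m m'
        rw [hd] at hc
        obtain ⟨f, h0, hn, hstep⟩ := hc
        obtain ⟨s, hs, he⟩ := hstep ρ (by omega)
        refine Or.inr (Set.mem_biUnion hs ⟨f ρ, ?_, by show R.sAct (f ρ) s = m'; rw [← he, hn]⟩)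
        exact R.dist_le S ⟨f, h0, rfl, fun i hi => hstep i (by omega)⟩
    exact Set.Finite.subset (ih.union (Set.Finite.biUnion hS.finite
      (fun s _ => ih.image _))) hsub

lemma countable_univ (hS : R.IsRightGenSet S) : (Set.univ : Set M).Countable := by
  have hsub : (Set.univ : Set M) ⊆ ⋃ k : ℕ, R.ball S R.m0 k := by
    intro m _
    obtain ⟨k, hk⟩ := R.chain_from_base S hS m
    exact Set.mem_iUnion.mpr ⟨k, R.dist_le S hk⟩
  exact Set.Countable.mono hsub
    (Set.countable_iUnion fun k => (R.ball_finite S hS R.m0 k).countable)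

end CellSpace

theorem stmt8
    (R : CellSpace G M) (S : Set G) (hS : R.IsRightGenSet S)
    (hM : Infinite M) (θ κ : ℕ) :
    ∃ T : Set M, T.Countable ∧ T.Infinite ∧
      IsTiling R S θ κ (4 * θ + 2 * κ) T := by
  classical
  set D := 2 * θ + κ + 1 with hD
  set 𝒮 : Set (Set M) :=
    {T | ∀ t ∈ T, ∀ t' ∈ T, t ≠ t' → D ≤ R.dist S t t'} with h𝒮
  have hzorn : ∀ c ⊆ 𝒮, IsChain (· ⊆ ·) c → ∃ ub ∈ 𝒮, ∀ s ∈ c, s ⊆ ub := by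
    intro c hc hchain
    refine ⟨⋃₀ c, ?_, fun s hs => Set.subset_sUnion_of_mem hs⟩
    rintro t ⟨A, hA, htA⟩ t' ⟨B, hB, htB⟩ hne
    rcases hchain.total hA hB with h | h
    · exact hc hB t (h htA) t' htB hne
    · exact hc hA t htA t' (h htB) hne
  obtain ⟨T, hTmax⟩ := zorn_subset 𝒮 hzorn
  have hTsep : ∀ t ∈ T, ∀ t' ∈ T, t ≠ t' → D ≤ R.dist S t t' := hTmax.prop
  -- covering
  have hcov : ∀ m : M, ∃ t ∈ T, R.dist S t m ≤ 4 * θ + 2 * κ := by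
    intro m
    by_contra hctr
    push_neg at hctr
    have hmT : m ∉ T := fun hm => by
      have := hctr m hm
      simp [R.dist_self S m] at this
    have hins : insert m T ∈ 𝒮 := by
      intro t ht t' ht' hne
      rcases ht with rfl | ht
      · rcases ht' with rfl | ht'
        · exact absurd rfl hne
        · rw [R.dist_comm S hS]
          have := hctr t' ht'
          omega
      · rcases ht' with rfl | ht'
        · have := hctr t ht
          omega
        · exact hTsep t ht t' ht' hne
    have := hTmax.eq_of_subset hins (Set.subset_insert m T)
    exact hmT (this ▸ Set.mem_insert m T)
  refine ⟨T, ?_, ?_, ?_, ?_⟩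
  · exact (R.countable_univ S hS).mono (Set.subset_univ T)
  · -- infinite
    intro hTfin
    have : (Set.univ : Set M).Finite := by
      refine Set.Finite.subset (hTfin.biUnion
        (fun t _ => R.ball_finite S hS t (4 * θ + 2 * κ))) ?_
      intro m _
      obtain ⟨t, ht, hd⟩ := hcov m
      exact Set.mem_biUnion ht hd
    exact Set.infinite_univ this
  · -- separation
    intro t ht t' ht' hne a ha b hb
    have h1 : R.dist S t t' ≤ R.dist S t a + R.dist S a b + R.dist S b t' :=
      le_trans (R.dist_triangle S hS t a t')
        (by have := R.dist_triangle S hS a b t'; omega)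
    have h2 : R.dist S b t' ≤ θ := by rw [R.dist_comm S hS]; exact hb
    have h3 := hTsep t ht t' ht' hne
    have h4 : R.dist S t a ≤ θ := ha
    omega
  · -- covering
    intro m
    obtain ⟨t, ht, hd⟩ := hcov m
    exact ⟨t, ht, hd⟩

end GoE
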